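/- arXiv:2110.07499 — 3 statements merged into one kernel-verified Lean document; each statement's English description precedes it below -/
import Mathlib

section
/- Let Y and Z be real random variables on a common probability space such that P(|Y| > x) > 0 for all x > 0 and, for every ε > 0, P(|Z| > εx) = o(P(|Y| > x)) as x → ∞. Then for every ε > 0: (a) P( |Z|/|Y| > ε | |Y| > x ) → 0 as x → ∞; and (b) P( | |Y|/|Y+Z| − 1 | > ε | |Y| > x ) → 0 as x → ∞ (with the convention that the event includes Y + Z = 0). -/
/-!
On `{|Y| > x}`, each of the two exceptional events forces `|Z| > δ x` for a suitable `δ > 0`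
(`δ = ε` for (a), `δ = ε / (1 + ε)` for (b)), so its conditional probability is at most
`P(|Z| > δ x) / P(|Y| > x)`, which tends to `0` by hypothesis.
-/

open MeasureTheory ProbabilityTheory Filter Topology
open scoped ENNReal

theorem tendsto_measure_div_zero_of_eventually_subset {α Ω : Type*} [MeasurableSpace Ω]
    {μ : Measure Ω} [IsFiniteMeasure μ] {l : Filter α} {A B C : α → Set Ω}
    (hAB : ∀ᶠ x in l, A x ⊆ B x)
    (hB : Tendsto (fun x => (μ (B x)).toReal / (μ (C x)).toReal) l (𝓝 0)) :
    Tendsto (fun x => (μ (A x)).toReal / (μ (C x)).toReal) l (𝓝 0) := by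
  refine squeeze_zero' (Eventually.of_forall fun x => by positivity) ?_ hB
  filter_upwards [hAB] with x hx
  gcongr
  exact measure_ne_top _ _

theorem abs_abs_div_abs_add_sub_one_le {ε y z : ℝ} (hε : 0 < ε) (hy : y ≠ 0)
    (hz : |z| ≤ ε / (1 + ε) * |y|) :
    y + z ≠ 0 ∧ |(|y| / |y + z| - 1)| ≤ ε := by
  have hy' : 0 < |y| := abs_pos.mpr hy
  have hz' : (1 + ε) * |z| ≤ ε * |y| := by
    rwa [div_mul_eq_mul_div, le_div_iff₀ (by positivity), mul_comm] at hz
  have hlower : |y| - |z| ≤ |y + z| := by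
    simpa using abs_sub_abs_le_abs_sub y (-z)
  have hsum : 0 < |y + z| := by nlinarith
  have hdiff : |(|y| - |y + z|)| ≤ |z| := by
    simpa using abs_abs_sub_abs_le_abs_sub y (y + z)
  refine ⟨abs_pos.mp hsum, ?_⟩
  rw [div_sub_one hsum.ne', abs_div, abs_of_pos hsum, div_le_iff₀ hsum]
  nlinarith

theorem inter_abs_gt_subset_abs_gt_mul {Ω : Type*} (Y Z : Ω → ℝ) {ε x : ℝ} (hε : 0 ≤ ε)
    (hx : 0 ≤ x) :
    {ω | |Z ω| / |Y ω| > ε} ∩ {ω | |Y ω| > x} ⊆ {ω | |Z ω| > ε * x} := by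
  rintro ω ⟨hratio, hYx⟩
  have hY : 0 < |Y ω| := hx.trans_lt hYx
  calc ε * x ≤ ε * |Y ω| := by gcongr; exact hYx.le
    _ < |Z ω| := (lt_div_iff₀ hY).mp hratio

theorem inter_abs_gt_subset_abs_gt_div_mul {Ω : Type*} (Y Z : Ω → ℝ) {ε x : ℝ} (hε : 0 < ε)
    (hx : 0 ≤ x) :
    {ω | Y ω + Z ω = 0 ∨ |(|Y ω| / |Y ω + Z ω| - 1)| > ε} ∩ {ω | |Y ω| > x}
      ⊆ {ω | |Z ω| > ε / (1 + ε) * x} := by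
  rintro ω ⟨hbad, hYx⟩
  have hY : 0 < |Y ω| := hx.trans_lt hYx
  have hZ : ε / (1 + ε) * |Y ω| < |Z ω| := by
    by_contra! hZ
    obtain ⟨hsum, hclose⟩ := abs_abs_div_abs_add_sub_one_le hε (abs_pos.mp hY) hZ
    exact hbad.elim hsum (not_lt.mpr hclose)
  calc ε / (1 + ε) * x ≤ ε / (1 + ε) * |Y ω| := by gcongr; exact hYx.le
    _ < |Z ω| := hZ

theorem conditional_negligibility_general
    {Ω : Type*} [MeasurableSpace Ω] (P : Measure Ω) [IsProbabilityMeasure P]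
    (Y Z : Ω → ℝ)
    (hZY : ∀ ε : ℝ, 0 < ε →
      Tendsto (fun x : ℝ => (P {ω | |Z ω| > ε * x}).toReal / (P {ω | |Y ω| > x}).toReal)
        atTop (𝓝 0)) :
    ∀ ε : ℝ, 0 < ε →
      -- (a) P( |Z|/|Y| > ε  |  |Y| > x ) → 0
      Tendsto (fun x : ℝ =>
          (P ({ω | |Z ω| / |Y ω| > ε} ∩ {ω | |Y ω| > x})).toReal
            / (P {ω | |Y ω| > x}).toReal)
        atTop (𝓝 0) ∧
      -- (b) P( | |Y|/|Y+Z| − 1 | > ε  |  |Y| > x ) → 0, the event including Y + Z = 0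
      Tendsto (fun x : ℝ =>
          (P ({ω | Y ω + Z ω = 0 ∨ abs (abs (Y ω) / abs (Y ω + Z ω) - 1) > ε} ∩ {ω | |Y ω| > x})).toReal
            / (P {ω | |Y ω| > x}).toReal)
        atTop (𝓝 0) := by
  intro ε hε
  constructor
  · refine tendsto_measure_div_zero_of_eventually_subset ?_ (hZY ε hε)
    filter_upwards [eventually_ge_atTop 0] with x hx
    exact inter_abs_gt_subset_abs_gt_mul Y Z hε.le hx
  · refine tendsto_measure_div_zero_of_eventually_subset ?_ (hZY (ε / (1 + ε)) (by positivity))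
    filter_upwards [eventually_ge_atTop 0] with x hx
    exact inter_abs_gt_subset_abs_gt_div_mul Y Z hε hx

/-- if `P(|Z| > εx) = o(P(|Y| > x))` for every `ε > 0`, then conditionally
on `|Y| > x`, `Z/|Y| → 0` and `|Y|/|Y+Z| → 1` in probability as `x → ∞` (the exceptional
event in (b) includes `Y + Z = 0` by convention). -/
theorem conditional_negligibility
    {Ω : Type*} [MeasurableSpace Ω] (P : Measure Ω) [IsProbabilityMeasure P]
    (Y Z : Ω → ℝ) (hY : Measurable Y) (hZ : Measurable Z)
    (hYpos : ∀ x : ℝ, 0 < x → 0 < P {ω | |Y ω| > x})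
    (hZY : ∀ ε : ℝ, 0 < ε →
      Tendsto (fun x : ℝ => (P {ω | |Z ω| > ε * x}).toReal / (P {ω | |Y ω| > x}).toReal)
        atTop (𝓝 0)) :
    ∀ ε : ℝ, 0 < ε →
      -- (a) P( |Z|/|Y| > ε  |  |Y| > x ) → 0
      Tendsto (fun x : ℝ =>
          (P ({ω | |Z ω| / |Y ω| > ε} ∩ {ω | |Y ω| > x})).toReal
            / (P {ω | |Y ω| > x}).toReal)
        atTop (𝓝 0) ∧
      -- (b) P( | |Y|/|Y+Z| − 1 | > ε  |  |Y| > x ) → 0, the event including Y + Z = 0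
      Tendsto (fun x : ℝ =>
          (P ({ω | Y ω + Z ω = 0 ∨ abs (abs (Y ω) / abs (Y ω + Z ω) - 1) > ε} ∩ {ω | |Y ω| > x})).toReal
            / (P {ω | |Y ω| > x}).toReal)
        atTop (𝓝 0) :=
  conditional_negligibility_general P Y Z hZY
end

section
/- Let p ∈ ℕ with p ≥ 2 and β ∈ (0, 1 − 1/p) (equivalently β_p := pβ − p + 1 < 0). Set q_{β,p} = min{ q ∈ ℕ : qβ − q + 1 < 0 } and D_{β,p} = Σ_{s=q_{β,p}}^{p} binom(p,s) (−1)^{p−s} (s(1−β) − 1)^{p−1}. Then 0 < D_{β,p} < 1. -/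
/-!
Put `a = 1 - β` and `x = 1 / a ∈ (1, p)`; minimality of `q` means `s < q` exactly when `s ≤ x`.
Hence `(s a - 1)^(p-1) = a^(p-1) (s - x)₊^(p-1)` for `s ≥ q`, while the right side vanishes for
`s < q`, so `D = a^(p-1) Δ^p (t ↦ t₊^(p-1)) (-x) = a^(p-1) (p-1)! M_p(x)`, where `M_p` is the
cardinal B-spline of degree `p - 1` (the density of a sum of `p` uniform variables). `M_p` is
positive on `(0, p)` by the Cox–de Boor recurrence. Being the integral of `M_(p-1)` over
`[x - 1, x]`, it satisfies `(p-1)! M_p(x) ≤ x^(p-1) - (x-1)^(p-1) < x^(p-1) = a^(1-p)` for `x > 1`.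
-/

open Finset Topology

section fwdDiff

variable {M G : Type*} [AddCommMonoid M] [AddCommGroup G] (h : M)

lemma fwdDiff_iter_succ_apply (f : M → G) (n : ℕ) (y : M) :
    (fwdDiff h)^[n + 1] f y = (fwdDiff h)^[n] f (y + h) - (fwdDiff h)^[n] f y := by
  rw [Function.iterate_succ_apply']
  rfl

lemma fwdDiff_iter_congr {f g : M → G} {n : ℕ} {y : M}
    (hfg : ∀ k ≤ n, f (y + k • h) = g (y + k • h)) :
    (fwdDiff h)^[n] f y = (fwdDiff h)^[n] g y := by
  simp only [fwdDiff_iter_eq_sum_shift]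
  exact sum_congr rfl fun k hk => by rw [hfg k (Nat.lt_succ_iff.1 (mem_range.1 hk))]

lemma fwdDiff_iter_eq_zero_of_forall {f : M → G} {n : ℕ} {y : M}
    (hf : ∀ k ≤ n, f (y + k • h) = 0) : (fwdDiff h)^[n] f y = 0 := by
  rw [fwdDiff_iter_eq_sum_shift]
  exact sum_eq_zero fun k hk => by rw [hf k (Nat.lt_succ_iff.1 (mem_range.1 hk)), smul_zero]

end fwdDiff

lemma fwdDiff_iter_succ_id_mul {R : Type*} [CommRing R] (f : R → R) (n : ℕ) (y : R) :
    (fwdDiff 1)^[n + 1] (fun t => t * f t) y =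
      y * (fwdDiff 1)^[n + 1] f y + (n + 1) * (fwdDiff 1)^[n] f (y + 1) := by
  induction n generalizing y with
  | zero =>
    simp only [fwdDiff_iter_succ_apply, Function.iterate_zero, id]
    ring
  | succ n ih =>
    rw [fwdDiff_iter_succ_apply, ih, ih, fwdDiff_iter_succ_apply _ f (n + 1),
      fwdDiff_iter_succ_apply _ f n (y + 1)]
    push_cast
    ring

lemma hasDerivAt_fwdDiff_iter {𝕜 F : Type*} [NontriviallyNormedField 𝕜] [NormedAddCommGroup F]
    [NormedSpace 𝕜 F] (h : 𝕜) {f f' : 𝕜 → F} (hf : ∀ y, HasDerivAt f (f' y) y) (n : ℕ) (y : 𝕜) :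
    HasDerivAt ((fwdDiff h)^[n] f) ((fwdDiff h)^[n] f' y) y := by
  induction n generalizing y with
  | zero => exact hf y
  | succ n ih =>
    have hshift : HasDerivAt (fun z => (fwdDiff h)^[n] f (z + h)) ((fwdDiff h)^[n] f' (y + h)) y :=
      HasDerivAt.comp_add_const y h (ih (y + h))
    rw [funext (fwdDiff_iter_succ_apply h f n), fwdDiff_iter_succ_apply]
    exact hshift.sub (ih y)

noncomputable def truncPow (e : ℕ) (t : ℝ) : ℝ := max t 0 ^ e

section truncPow

variable {e : ℕ} {t : ℝ}

lemma truncPow_nonneg (e : ℕ) (t : ℝ) : 0 ≤ truncPow e t :=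
  pow_nonneg (le_max_right t 0) e

lemma truncPow_of_nonpos (he : e ≠ 0) (ht : t ≤ 0) : truncPow e t = 0 := by
  rw [truncPow, max_eq_right ht, zero_pow he]

lemma truncPow_of_nonneg (ht : 0 ≤ t) : truncPow e t = t ^ e := by
  rw [truncPow, max_eq_left ht]

lemma truncPow_succ (he : e ≠ 0) (t : ℝ) : truncPow (e + 1) t = t * truncPow e t := by
  rcases le_total t 0 with ht | ht
  · rw [truncPow_of_nonpos (Nat.succ_ne_zero e) ht, truncPow_of_nonpos he ht, mul_zero]
  · rw [truncPow_of_nonneg ht, truncPow_of_nonneg ht, pow_succ']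

lemma truncPow_mul {c : ℝ} (hc : 0 ≤ c) (e : ℕ) (t : ℝ) :
    truncPow e (c * t) = c ^ e * truncPow e t := by
  rw [truncPow, truncPow, ← mul_pow, mul_max_of_nonneg _ _ hc, mul_zero]

lemma hasDerivAt_truncPow (he : e ≠ 0) (t : ℝ) :
    HasDerivAt (truncPow (e + 1)) ((e + 1) * truncPow e t) t := by
  rcases lt_trichotomy t 0 with ht | rfl | ht
  · have hzero : truncPow (e + 1) =ᶠ[𝓝 t] fun _ => 0 := by
      filter_upwards [Iio_mem_nhds ht] with u hu
      exact truncPow_of_nonpos (Nat.succ_ne_zero e) (le_of_lt hu)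
    rw [truncPow_of_nonpos he ht.le, mul_zero]
    exact (hasDerivAt_const t 0).congr_of_eventuallyEq hzero
  · have hleft : HasDerivWithinAt (truncPow (e + 1)) 0 (Set.Iic 0) 0 :=
      (hasDerivWithinAt_const 0 _ 0).congr_of_mem
        (fun u hu => truncPow_of_nonpos (Nat.succ_ne_zero e) hu) (Set.mem_Iic.2 le_rfl)
    have hright : HasDerivWithinAt (truncPow (e + 1)) 0 (Set.Ici 0) 0 := by
      simpa only [add_tsub_cancel_right, zero_pow he, mul_zero] using
        (hasDerivAt_pow (e + 1) (0 : ℝ)).hasDerivWithinAt.congr_of_mem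
          (fun u (hu : u ∈ Set.Ici 0) => truncPow_of_nonneg hu) (Set.mem_Ici.2 le_rfl)
    rw [truncPow_of_nonpos he le_rfl, mul_zero, ← hasDerivWithinAt_univ, ← Set.Iic_union_Ici]
    exact hleft.union hright
  · have hpow : truncPow (e + 1) =ᶠ[𝓝 t] fun u => u ^ (e + 1) := by
      filter_upwards [Ioi_mem_nhds ht] with u hu
      exact truncPow_of_nonneg (le_of_lt hu)
    rw [truncPow_of_nonneg ht.le]
    simpa using (hasDerivAt_pow (e + 1) t).congr_of_eventuallyEq hpow

end truncPow

/-- `m!` times the cardinal B-spline of degree `m`, reflected so that it is supported on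
`[-(m + 1), 0]`. -/
noncomputable def bspline (m : ℕ) : ℝ → ℝ := (fwdDiff 1)^[m + 1] (truncPow m)

section bspline

variable {m : ℕ} {y : ℝ}

lemma bspline_eq_zero_of_le (hm : m ≠ 0) (hy : y ≤ -(m + 1)) : bspline m y = 0 :=
  fwdDiff_iter_eq_zero_of_forall 1 fun k hk => truncPow_of_nonpos hm <| by
    have : (k : ℝ) ≤ m + 1 := by exact_mod_cast hk
    rw [nsmul_one]
    linarith

lemma bspline_eq_zero_of_nonneg (hy : 0 ≤ y) : bspline m y = 0 := by
  have hpoly : bspline m y = (fwdDiff 1)^[m + 1] (fun t : ℝ => t ^ m) y :=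
    fwdDiff_iter_congr 1 fun k _ => truncPow_of_nonneg (by positivity)
  rw [hpoly, fwdDiff_iter_pow_eq_zero_of_lt (Nat.lt_succ_self m), Pi.zero_apply]

lemma bspline_succ (hm : m ≠ 0) (y : ℝ) :
    bspline (m + 1) y = (y + m + 2) * bspline m (y + 1) - y * bspline m y := by
  have hmul : truncPow (m + 1) = fun t => t * truncPow m t := funext (truncPow_succ hm)
  rw [bspline, hmul, fwdDiff_iter_succ_id_mul, fwdDiff_iter_succ_apply]
  simp only [bspline]
  push_cast
  ring

lemma bspline_one (y : ℝ) : bspline 1 y = max (y + 2) 0 - 2 * max (y + 1) 0 + max y 0 := by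
  simp only [bspline, fwdDiff_iter_succ_apply, Function.iterate_zero, id, truncPow, pow_one]
  ring_nf

lemma bspline_nonneg (hm : m ≠ 0) (y : ℝ) : 0 ≤ bspline m y := by
  induction m, Nat.one_le_iff_ne_zero.2 hm using Nat.le_induction generalizing y with
  | base =>
    rw [bspline_one]
    simp only [max_def]
    split_ifs <;> linarith
  | succ m hm1 ih =>
    have hm : m ≠ 0 := Nat.one_le_iff_ne_zero.1 hm1
    rcases le_or_gt y (-(m + 1 + 1)) with hle | hlt
    · exact (bspline_eq_zero_of_le (Nat.succ_ne_zero m) (by push_cast; linarith)).ge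
    rcases le_or_gt 0 y with hge | hneg
    · exact (bspline_eq_zero_of_nonneg hge).ge
    rw [bspline_succ hm]
    have h₁ := mul_nonneg (by linarith : (0 : ℝ) ≤ y + m + 2) (ih hm (y + 1))
    have h₂ := mul_nonneg (by linarith : (0 : ℝ) ≤ -y) (ih hm y)
    linarith

lemma bspline_pos (hm : m ≠ 0) (hy₁ : -(m + 1) < y) (hy₂ : y < 0) : 0 < bspline m y := by
  induction m, Nat.one_le_iff_ne_zero.2 hm using Nat.le_induction generalizing y with
  | base =>
    rw [bspline_one]
    simp only [max_def]
    norm_num at hy₁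
    split_ifs <;> linarith
  | succ m hm1 ih =>
    have hm : m ≠ 0 := Nat.one_le_iff_ne_zero.1 hm1
    have hm' : (1 : ℝ) ≤ m := by exact_mod_cast hm1
    push_cast at hy₁
    rw [bspline_succ hm]
    have h₁ := mul_nonneg (by linarith : (0 : ℝ) ≤ y + m + 2) (bspline_nonneg hm (y + 1))
    have h₂ := mul_nonneg (by linarith : (0 : ℝ) ≤ -y) (bspline_nonneg hm y)
    rcases lt_or_ge (-(m + 1 : ℝ)) y with hlt | hle
    · have := mul_pos (by linarith : (0 : ℝ) < -y) (ih hm hlt hy₂)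
      linarith
    · have := mul_pos (by linarith : (0 : ℝ) < y + m + 2)
        (ih (y := y + 1) hm (by linarith) (by linarith))
      linarith

lemma bspline_le (hm : m ≠ 0) (y : ℝ) :
    bspline m y ≤ truncPow m (-y) - truncPow m (-y - 1) := by
  induction m, Nat.one_le_iff_ne_zero.2 hm using Nat.le_induction generalizing y with
  | base =>
    rw [bspline_one]
    simp only [truncPow, pow_one, max_def]
    split_ifs <;> linarith
  | succ m hm1 ih =>
    have hm : m ≠ 0 := Nat.one_le_iff_ne_zero.1 hm1
    -- `F' = (m + 1) • bspline m` turns `bspline (m + 1) y = F (y + 1) - F y` into an integral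
    -- over `[y, y + 1]`, which the induction hypothesis bounds by the integral of `-G'`.
    set F := (fwdDiff 1)^[m + 1] (truncPow (m + 1))
    set G := fun t => truncPow (m + 1) (-t)
    have hF : ∀ t, HasDerivAt F ((m + 1) * bspline m t) t := by
      intro t
      have h := hasDerivAt_fwdDiff_iter 1 (hasDerivAt_truncPow hm) (m + 1) t
      have hsmul : (fun t => ((m : ℝ) + 1) * truncPow m t) = ((m : ℝ) + 1) • truncPow m := rfl
      rwa [hsmul, fwdDiff_iter_const_smul] at h
    have hG : ∀ t, HasDerivAt G (-((m + 1) * truncPow m (-t))) t := fun t => by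
      simpa [Function.comp_def] using (hasDerivAt_truncPow hm (-t)).scomp t (hasDerivAt_neg t)
    have hanti : Antitone (F + G) := by
      refine antitone_of_hasDerivAt_nonpos (fun t => (hF t).add (hG t)) fun t => ?_
      have hb : bspline m t ≤ truncPow m (-t) :=
        (ih hm t).trans (sub_le_self _ (truncPow_nonneg m _))
      have := mul_le_mul_of_nonneg_left hb (by positivity : (0 : ℝ) ≤ m + 1)
      simp only [Pi.zero_apply]
      linarith
    have hstep := hanti (le_add_of_nonneg_right zero_le_one : y ≤ y + 1)
    have hsplit : bspline (m + 1) y = F (y + 1) - F y := fwdDiff_iter_succ_apply 1 _ _ y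
    simp only [Pi.add_apply, G, neg_add'] at hstep
    linarith

end bspline

lemma sum_Icc_choose_mul_eq_pow_mul_bspline {m q : ℕ} (hm : m ≠ 0) {a : ℝ} (ha : 0 < a)
    (hq : ∀ s : ℕ, q ≤ s ↔ 1 < s * a) :
    ∑ s ∈ Icc q (m + 1), ((m + 1).choose s : ℝ) * (-1) ^ (m + 1 - s) * (s * a - 1) ^ m =
      a ^ m * bspline m (-a⁻¹) := by
  have hterm : ∀ s : ℕ, a ^ m * truncPow m (-a⁻¹ + s) = if q ≤ s then (s * a - 1) ^ m else 0 := by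
    intro s
    rw [← truncPow_mul ha.le, mul_add, mul_neg, mul_inv_cancel₀ ha.ne']
    split_ifs with h <;> rw [hq] at h
    · rw [truncPow_of_nonneg (by linarith)]; ring
    · rw [truncPow_of_nonpos hm (by linarith)]
  have hIcc : Icc q (m + 1) = (range (m + 1 + 1)).filter (q ≤ ·) := by ext; simp; omega
  rw [bspline, fwdDiff_iter_eq_sum_shift, mul_sum, hIcc, sum_filter]
  refine sum_congr rfl fun s _ => ?_
  rw [zsmul_eq_mul, nsmul_one, mul_left_comm, hterm]
  split_ifs <;> push_cast <;> ring

lemma le_iff_one_lt_natCast_mul {q : ℕ} {a : ℝ} (ha : 0 < a) (hq : 1 < q * a)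
    (hmin : ∀ s : ℕ, 1 ≤ s → 1 < s * a → q ≤ s) (s : ℕ) : q ≤ s ↔ 1 < s * a := by
  refine ⟨fun h => hq.trans_le (by gcongr), fun h => hmin s ?_ h⟩
  rcases Nat.eq_zero_or_pos s with rfl | hs
  · norm_num at h
  · exact hs

theorem D_beta_p_mem_Ioo_general
    (p : ℕ) (hp : 2 ≤ p) (β : ℝ) (hβ : β ∈ Set.Ioo (0 : ℝ) (1 - 1 / p))
    (q : ℕ) (hqlt : (q : ℝ) * β - q + 1 < 0)
    (hqmin : ∀ q' : ℕ, 1 ≤ q' → (q' : ℝ) * β - q' + 1 < 0 → q ≤ q') :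
    (0 : ℝ) < ∑ s ∈ Finset.Icc q p,
        (p.choose s : ℝ) * (-1 : ℝ) ^ (p - s) * ((s : ℝ) * (1 - β) - 1) ^ (p - 1) ∧
      ∑ s ∈ Finset.Icc q p,
        (p.choose s : ℝ) * (-1 : ℝ) ^ (p - s) * ((s : ℝ) * (1 - β) - 1) ^ (p - 1) < 1 := by
  obtain ⟨m, rfl⟩ : ∃ m, p = m + 1 := ⟨p - 1, by omega⟩
  have hm : m ≠ 0 := by omega
  obtain ⟨hβ₀, hβ₁⟩ := hβ
  push_cast [one_div] at hβ₁
  set a := 1 - β with ha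
  have ha₀ : 0 < a := by
    have : (0 : ℝ) < ((m : ℝ) + 1)⁻¹ := by positivity
    linarith
  have hx₁ : 1 < a⁻¹ := (one_lt_inv₀ ha₀).2 (by linarith)
  have hxm : a⁻¹ < m + 1 := (inv_lt_comm₀ ha₀ (by positivity)).2 (by linarith)
  have hsa (s : ℕ) : (s : ℝ) * β - s + 1 < 0 ↔ 1 < s * a := by
    rw [ha]
    constructor <;> intro h <;> linarith
  have hq := le_iff_one_lt_natCast_mul ha₀ ((hsa q).1 hqlt) fun s hs h => hqmin s hs ((hsa s).2 h)
  rw [Nat.add_sub_cancel, sum_Icc_choose_mul_eq_pow_mul_bspline hm ha₀ hq]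
  refine ⟨mul_pos (pow_pos ha₀ m) (bspline_pos hm (by linarith) (by linarith)), ?_⟩
  have hgap : 0 < truncPow m (a⁻¹ - 1) := by
    rw [truncPow_of_nonneg (by linarith)]
    exact pow_pos (by linarith) m
  calc a ^ m * bspline m (-a⁻¹) ≤ a ^ m * (truncPow m a⁻¹ - truncPow m (a⁻¹ - 1)) := by
        gcongr
        simpa using bspline_le hm (-a⁻¹)
    _ < a ^ m * truncPow m a⁻¹ := by gcongr; exact sub_lt_self _ hgap
    _ = 1 := by rw [truncPow_of_nonneg (by positivity), ← mul_pow, mul_inv_cancel₀ ha₀.ne', one_pow]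

/-- for `p ≥ 2` and `β ∈ (0, 1 − 1/p)` (i.e. `β_p = pβ − p + 1 < 0`), with
`q_{β,p} = min{q ≥ 1 : qβ − q + 1 < 0}`, the constant
`D_{β,p} = Σ_{s=q_{β,p}}^p C(p,s) (−1)^{p−s} (s(1−β) − 1)^{p−1}` satisfies `0 < D_{β,p} < 1`. -/
theorem D_beta_p_mem_Ioo
    (p : ℕ) (hp : 2 ≤ p) (β : ℝ) (hβ : β ∈ Set.Ioo (0 : ℝ) (1 - 1 / p))
    (q : ℕ) (hq1 : 1 ≤ q) (hqlt : (q : ℝ) * β - q + 1 < 0)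
    (hqmin : ∀ q' : ℕ, 1 ≤ q' → (q' : ℝ) * β - q' + 1 < 0 → q ≤ q') :
    (0 : ℝ) < ∑ s ∈ Finset.Icc q p,
        (p.choose s : ℝ) * (-1 : ℝ) ^ (p - s) * ((s : ℝ) * (1 - β) - 1) ^ (p - 1) ∧
      ∑ s ∈ Finset.Icc q p,
        (p.choose s : ℝ) * (-1 : ℝ) ^ (p - s) * ((s : ℝ) * (1 - β) - 1) ^ (p - 1) < 1 :=
  D_beta_p_mem_Ioo_general p hp β hβ q hqlt hqmin
end

section
/- Let F be a distribution function on ℕ with probability mass function f(n) = F(n) − F(n−1). Let τ^{→} and τ^{←} be independent, where τ^{→} is a non-delayed renewal process with inter-renewal distribution F and τ^{←} = −τ' for an independent copy τ' of τ^{→} (so τ^{←} ⊆ −ℕ_0 with 0 ∈ τ^{←}). For d ∈ ℕ_0 and g ∈ ℕ define the random subset of ℤ given by T(d,g) = (d + τ^{→}) ∪ (−g + τ^{←}), and define the (σ-finite, infinite) measure Q on subsets of ℤ (with the cylinder σ-field generated by the events {t : k ∈ t}, k ∈ ℤ) by Q(A) = Σ_{d∈ℕ_0} Σ_{g∈ℕ}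 f(d+g) P( T(d,g) ∈ A ). Then Q is invariant under the shift B(t) = t + 1 = {k+1 : k ∈ t}, i.e. Q(B^{−1} A) = Q(A) for every measurable A. -/
/-!
Encode the gaps of both renewal processes as one i.i.d. family `x : ℕ ⊕ ℕ → ℕ`. The shift moves
the two starting points of `T(d,g)` to `d + 1` and `-g + 1`, so `Q ∘ B⁻¹` is the double series
defining `Q`, re-indexed from `d ≥ 0, g ≥ 1` to `d ≥ 1, g ≥ 0`. The two series differ only by the
boundary sums `Σ_{d ≥ 1} f(d) P(T(d,0) ∈ A)` and `Σ_{g ≥ 1} f(g) P(T(0,g) ∈ A)`. Adding the finite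
term `f(0) P(T(0,0) ∈ A)` to either one gives `P(T(0,0) ∈ A)`, because prepending an independent
`F`-distributed gap to the forward or to the backward gap sequence leaves its i.i.d. law unchanged.
-/

open MeasureTheory ProbabilityTheory
open scoped ENNReal

theorem measurable_optionElim {α κ : Type*} [MeasurableSpace α] :
    Measurable fun (p : α × (κ → α)) (o : Option κ) => o.elim p.1 p.2 := by
  refine measurable_pi_lambda _ fun o => ?_
  cases o with
  | none => exact measurable_fst
  | some k => exact (measurable_pi_apply k).comp measurable_snd

theorem measurable_optionElim_comp {α ι κ : Type*} [MeasurableSpace α] (f : ι → Option κ) :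
    Measurable fun (p : α × (κ → α)) i => (f i).elim p.1 p.2 :=
  (measurable_pi_lambda _ fun i => measurable_pi_apply (f i)).comp measurable_optionElim

namespace MeasureTheory.Measure

variable {α κ ι : Type*} [MeasurableSpace α] (μ : Measure α) [IsProbabilityMeasure μ]

theorem infinitePi_map_optionElim :
    (μ.prod (infinitePi fun _ : κ => μ)).map (fun p (o : Option κ) => o.elim p.1 p.2)
      = infinitePi fun _ : Option κ => μ := by
  classical
  refine eq_infinitePi _ fun s t ht => ?_
  have hbox : (fun p : α × (κ → α) => fun o : Option κ => o.elim p.1 p.2) ⁻¹' (s : Set _).pi t =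
      (if none ∈ s then t none else Set.univ) ×ˢ (s.eraseNone : Set κ).pi fun k => t (some k) := by
    ext ⟨a, x⟩
    split_ifs with h <;> simp [Option.forall, h]
  rw [map_apply measurable_optionElim (.pi s.countable_toSet fun i _ => ht i), hbox, prod_prod,
    infinitePi_pi _ fun k _ => ht (some k), Finset.prod_eraseNone, apply_ite μ, measure_univ,
    ← Finset.prod_ite_eq' s none fun _ => μ (t none), ← Finset.prod_mul_distrib]
  refine Finset.prod_congr rfl fun o _ => ?_
  cases o <;> simp

theorem map_prod_infinitePi_optionElim {f : ι → Option κ} (hf : Function.Injective f) :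
    (μ.prod (infinitePi fun _ : κ => μ)).map (fun p i => (f i).elim p.1 p.2)
      = infinitePi fun _ : ι => μ := by
  rw [← map_infinitePi_infinitePi_of_inj (P := fun _ : Option κ => μ) hf,
    ← infinitePi_map_optionElim, map_map (by fun_prop) measurable_optionElim]
  rfl

theorem tsum_mul_infinitePi_preimage_optionElim [Countable α] [MeasurableSingletonClass α]
    {f : ι → Option ι} (hf : Function.Injective f) {S : Set (ι → α)} (hS : MeasurableSet S) :
    ∑' a, μ {a} * infinitePi (fun _ => μ) ((fun x i => (f i).elim a x) ⁻¹' S)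
      = infinitePi (fun _ => μ) S := by
  conv_rhs =>
    rw [← map_prod_infinitePi_optionElim μ hf, map_apply (measurable_optionElim_comp f) hS,
      prod_apply (measurable_optionElim_comp f hS), lintegral_countable']
  exact tsum_congr fun a => mul_comm _ _

end MeasureTheory.Measure

theorem ProbabilityTheory.iIndepFun.map_fun_eq_infinitePi_of_identDistrib {ι Ω α : Type*}
    [MeasurableSpace Ω] [MeasurableSpace α] {P : Measure Ω} {X : ι → Ω → α} {Y : Ω → α}
    (hmeas : ∀ i, Measurable (X i)) (hindep : iIndepFun X P)
    (hid : ∀ i, IdentDistrib (X i) Y P P) :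
    P.map (fun ω i => X i ω) = Measure.infinitePi fun _ => P.map Y := by
  rw [hindep.map_fun_eq_infinitePi_map hmeas]
  simp_rw [(hid _).map_eq]

theorem ENNReal.tsum_tsum_add_one_right_eq_tsum_tsum_add_one_left {a : ℕ → ℕ → ℝ≥0∞}
    (h₀ : a 0 0 ≠ ∞) (h : ∑' d, a d 0 = ∑' e, a 0 e) :
    ∑' d, ∑' e, a d (e + 1) = ∑' d, ∑' e, a (d + 1) e := by
  have hboundary : ∑' d, a (d + 1) 0 = ∑' e, a 0 (e + 1) := by
    rwa [tsum_eq_zero_add' (f := fun d => a d 0) ENNReal.summable,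
      tsum_eq_zero_add' (f := a 0) ENNReal.summable, ENNReal.add_right_inj h₀] at h
  rw [tsum_eq_zero_add' ENNReal.summable, ← hboundary, ← ENNReal.tsum_add]
  exact tsum_congr fun d => (tsum_eq_zero_add' ENNReal.summable).symm

/-- `(a + τ^→) ∪ (b + τ^←)`, with forward gaps `x (.inl ·)` and backward gaps `x (.inr ·)`;
the paper's `T(d,g)` is `gluedRenewalSet d (-g)`. -/
def gluedRenewalSet (a b : ℤ) (x : ℕ ⊕ ℕ → ℕ) : ℤ → Prop := fun k =>
  (∃ l : ℕ, a + ∑ j ∈ Finset.range l, (x (.inl j) : ℤ) = k) ∨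
  (∃ l : ℕ, b - ∑ j ∈ Finset.range l, (x (.inr j) : ℤ) = k)

/-- `fun i => (headInl i).elim g x` is `x` with `g` prepended to the forward gaps. -/
def headInl : ℕ ⊕ ℕ → Option (ℕ ⊕ ℕ)
  | .inl 0 => none
  | .inl (n + 1) => some (.inl n)
  | .inr n => some (.inr n)

def headInr : ℕ ⊕ ℕ → Option (ℕ ⊕ ℕ)
  | .inl n => some (.inl n)
  | .inr 0 => none
  | .inr (n + 1) => some (.inr n)

theorem headInl_injective : Function.Injective headInl := by
  rintro ((_ | m) | m) ((_ | n) | n) h <;> simp_all [headInl]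

theorem headInr_injective : Function.Injective headInr := by
  rintro (m | (_ | m)) (n | (_ | n)) h <;> simp_all [headInr]

theorem measurable_gluedRenewalSet (a b : ℤ) : Measurable (gluedRenewalSet a b) := by
  refine measurable_pi_lambda _ fun k => ?_
  unfold gluedRenewalSet
  fun_prop

theorem gluedRenewalSet_shift (a b : ℤ) :
    (fun t k => t (k - 1)) ∘ gluedRenewalSet a b = gluedRenewalSet (a + 1) (b + 1) := by
  funext x k
  simp only [Function.comp_apply, gluedRenewalSet, eq_sub_iff_add_eq, add_right_comm _ _ (1 : ℤ),
    sub_add_eq_add_sub]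

theorem gluedRenewalSet_headInl (a : ℤ) (g : ℕ) (x : ℕ ⊕ ℕ → ℕ) :
    gluedRenewalSet a a (fun i => (headInl i).elim g x) = gluedRenewalSet (a + g) a x := by
  have hsum : ∀ l, ∑ j ∈ Finset.range (l + 1), (((headInl (.inl j)).elim g x : ℕ) : ℤ)
      = g + ∑ j ∈ Finset.range l, (x (.inl j) : ℤ) := by
    intro l; rw [Finset.sum_range_succ']; simp [headInl]; ring
  funext k
  have hstart : a = k → ∃ l : ℕ, a - ∑ j ∈ Finset.range l, (x (.inr j) : ℤ) = k :=
    fun h => ⟨0, by simpa using h⟩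
  simp only [gluedRenewalSet]
  rw [← Nat.or_exists_add_one, Finset.sum_range_zero, add_zero]
  simp only [hsum, ← add_assoc]
  simp only [headInl, Option.elim]
  exact propext ⟨by tauto, by tauto⟩

theorem gluedRenewalSet_headInr (a : ℤ) (g : ℕ) (x : ℕ ⊕ ℕ → ℕ) :
    gluedRenewalSet a a (fun i => (headInr i).elim g x) = gluedRenewalSet a (a - g) x := by
  have hsum : ∀ l, ∑ j ∈ Finset.range (l + 1), (((headInr (.inr j)).elim g x : ℕ) : ℤ)
      = g + ∑ j ∈ Finset.range l, (x (.inr j) : ℤ) := by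
    intro l; rw [Finset.sum_range_succ']; simp [headInr]; ring
  funext k
  have hstart : a = k → ∃ l : ℕ, a + ∑ j ∈ Finset.range l, (x (.inl j) : ℤ) = k :=
    fun h => ⟨0, by simpa using h⟩
  simp only [gluedRenewalSet]
  rw [← Nat.or_exists_add_one (p := fun l => a - _ = k), Finset.sum_range_zero, sub_zero]
  simp only [hsum, ← sub_sub]
  simp only [headInr, Option.elim]
  exact propext ⟨by tauto, by tauto⟩

section TwoSidedRenewalMeasure

variable (μ : Measure ℕ)

noncomputable def twoSidedRenewalMeasure : Measure (ℤ → Prop) :=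
  Measure.sum fun dg : ℕ × ℕ => μ {dg.1 + dg.2 + 1} •
    (Measure.infinitePi fun _ : ℕ ⊕ ℕ => μ).map (gluedRenewalSet dg.1 (-(dg.2 + 1 : ℕ)))

theorem twoSidedRenewalMeasure_apply {S : Set (ℤ → Prop)} (hS : MeasurableSet S) :
    twoSidedRenewalMeasure μ S = ∑' d : ℕ, ∑' e : ℕ, μ {d + e + 1} *
      Measure.infinitePi (fun _ => μ) (gluedRenewalSet d (-(e + 1 : ℕ)) ⁻¹' S) := by
  rw [twoSidedRenewalMeasure, Measure.sum_apply _ hS, ENNReal.tsum_prod']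
  refine tsum_congr fun d => tsum_congr fun e => ?_
  rw [Measure.smul_apply, smul_eq_mul, Measure.map_apply (measurable_gluedRenewalSet _ _) hS]

variable [IsProbabilityMeasure μ] {A : Set (ℤ → Prop)}

theorem tsum_mul_infinitePi_gluedRenewalSet_left (hA : MeasurableSet A) :
    ∑' g : ℕ, μ {g} * Measure.infinitePi (fun _ => μ) (gluedRenewalSet g 0 ⁻¹' A)
      = Measure.infinitePi (fun _ => μ) (gluedRenewalSet 0 0 ⁻¹' A) := by
  rw [← Measure.tsum_mul_infinitePi_preimage_optionElim μ headInl_injective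
    (measurable_gluedRenewalSet 0 0 hA)]
  refine tsum_congr fun g => ?_
  simp only [Set.preimage_preimage, gluedRenewalSet_headInl, zero_add]

theorem tsum_mul_infinitePi_gluedRenewalSet_right (hA : MeasurableSet A) :
    ∑' g : ℕ, μ {g} * Measure.infinitePi (fun _ => μ) (gluedRenewalSet 0 (-g) ⁻¹' A)
      = Measure.infinitePi (fun _ => μ) (gluedRenewalSet 0 0 ⁻¹' A) := by
  rw [← Measure.tsum_mul_infinitePi_preimage_optionElim μ headInr_injective
    (measurable_gluedRenewalSet 0 0 hA)]
  refine tsum_congr fun g => ?_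
  simp only [Set.preimage_preimage, gluedRenewalSet_headInr, zero_sub]

theorem measurable_comp_sub_one : Measurable fun (t : ℤ → Prop) (k : ℤ) => t (k - 1) :=
  measurable_pi_lambda _ fun k => measurable_pi_apply (k - 1)

theorem map_shift_twoSidedRenewalMeasure :
    (twoSidedRenewalMeasure μ).map (fun t k => t (k - 1)) = twoSidedRenewalMeasure μ := by
  ext A hA
  set a := fun d e : ℕ =>
    μ {d + e} * Measure.infinitePi (fun _ => μ) (gluedRenewalSet d (-e) ⁻¹' A)
  have hboundary : ∑' d, a d 0 = ∑' e, a 0 e := by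
    simp only [a, add_zero, zero_add, Nat.cast_zero, neg_zero]
    exact (tsum_mul_infinitePi_gluedRenewalSet_left μ hA).trans
      (tsum_mul_infinitePi_gluedRenewalSet_right μ hA).symm
  calc _ = ∑' d, ∑' e, a (d + 1) e := by
        rw [Measure.map_apply measurable_comp_sub_one hA,
          twoSidedRenewalMeasure_apply μ (measurable_comp_sub_one hA)]
        refine tsum_congr fun d => tsum_congr fun e => ?_
        rw [← Set.preimage_comp, gluedRenewalSet_shift, Nat.add_right_comm]
        congr 4
        push_cast
        ring
    _ = ∑' d, ∑' e, a d (e + 1) :=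
        (ENNReal.tsum_tsum_add_one_right_eq_tsum_tsum_add_one_left
          (ENNReal.mul_ne_top (measure_ne_top _ _) (measure_ne_top _ _)) hboundary).symm
    _ = _ := (twoSidedRenewalMeasure_apply μ hA).symm

end TwoSidedRenewalMeasure

theorem two_sided_renewal_shift_invariance_general
    {Ω : Type*} [MeasurableSpace Ω] (P : Measure Ω) [IsProbabilityMeasure P]
    -- inter-renewal times of the right and left renewal processes, jointly i.i.d.
    (ξr ξl : ℕ → Ω → ℕ)
    (hmeas_r : ∀ j, Measurable (ξr j)) (hmeas_l : ∀ j, Measurable (ξl j))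
    (hindep : iIndepFun
      (Sum.elim ξr ξl) P)
    (hid : ∀ j : ℕ ⊕ ℕ, IdentDistrib (Sum.elim ξr ξl j) (ξr 0) P P)
    -- the probability mass function `f` of the inter-renewal distribution
    (f : ℕ → ℝ≥0∞) (hf : ∀ n, f n = P {ω | ξr 0 ω = n})
    -- `T d g ω ⊆ ℤ` is `(d + τ^→(ω)) ∪ (−g + τ^←(ω))`
    (T : ℕ → ℕ → Ω → ℤ → Prop)
    (hT : ∀ d g ω, T d g ω = fun k =>
      (∃ l : ℕ, (d : ℤ) + ∑ j ∈ Finset.range l, (ξr j ω : ℤ) = k) ∨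
      (∃ l : ℕ, -(g : ℤ) - ∑ j ∈ Finset.range l, (ξl j ω : ℤ) = k))
    -- the σ-finite measure `Q(A) = Σ_{d,g} f(d+g) P(T(d,g) ∈ A)`
    (Q : Measure (ℤ → Prop))
    (hQ : Q = Measure.sum (fun dg : ℕ × ℕ =>
      f (dg.1 + dg.2 + 1) • Measure.map (T dg.1 (dg.2 + 1)) P)) :
    ∀ A : Set (ℤ → Prop), MeasurableSet A →
      Q ((fun t : ℤ → Prop => fun k => t (k - 1)) ⁻¹' A) = Q A := by
  intro A hA
  have hmeas : ∀ i, Measurable (Sum.elim ξr ξl i) := fun i => i.rec hmeas_r hmeas_l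
  have hlaw := hindep.map_fun_eq_infinitePi_of_identDistrib hmeas hid
  obtain rfl : T = fun (d g : ℕ) ω => gluedRenewalSet d (-g) fun i => Sum.elim ξr ξl i ω := by
    funext d g ω; exact hT d g ω
  have hQμ : Q = twoSidedRenewalMeasure (P.map (ξr 0)) := by
    rw [hQ, twoSidedRenewalMeasure]
    congr 1
    funext dg
    congr 1
    · rw [hf, Measure.map_apply (hmeas_r 0) (measurableSet_singleton _)]
      rfl
    · rw [← hlaw, Measure.map_map (measurable_gluedRenewalSet _ _) (measurable_pi_lambda _ hmeas)]
      rfl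
  have : IsProbabilityMeasure (P.map (ξr 0)) :=
    Measure.isProbabilityMeasure_map (hmeas_r 0).aemeasurable
  rw [hQμ, ← Measure.map_apply measurable_comp_sub_one hA, map_shift_twoSidedRenewalMeasure]

/-- the measure `Q = Σ_{d∈ℕ₀, g∈ℕ} f(d+g) · Law(T(d,g))` on subsets of `ℤ`
(identified with `ℤ → Prop`, carrying the cylinder σ-field generated by the coordinate
events `{t | k ∈ t}`), where `T(d,g) = (d + τ^→) ∪ (−g + τ^←)` glues two independent
one-sided renewal processes, is invariant under the shift `B(t) = t + 1`. -/
theorem two_sided_renewal_shift_invariance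
    {Ω : Type*} [MeasurableSpace Ω] (P : Measure Ω) [IsProbabilityMeasure P]
    -- inter-renewal times of the right and left renewal processes, jointly i.i.d.
    (ξr ξl : ℕ → Ω → ℕ)
    (hmeas_r : ∀ j, Measurable (ξr j)) (hmeas_l : ∀ j, Measurable (ξl j))
    (hindep : iIndepFun
      (Sum.elim ξr ξl) P)
    (hid : ∀ j : ℕ ⊕ ℕ, IdentDistrib (Sum.elim ξr ξl j) (ξr 0) P P)
    (hpos : P {ω | ξr 0 ω = 0} = 0)
    -- the probability mass function `f` of the inter-renewal distribution
    (f : ℕ → ℝ≥0∞) (hf : ∀ n, f n = P {ω | ξr 0 ω = n})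
    -- `T d g ω ⊆ ℤ` is `(d + τ^→(ω)) ∪ (−g + τ^←(ω))`
    (T : ℕ → ℕ → Ω → ℤ → Prop)
    (hT : ∀ d g ω, T d g ω = fun k =>
      (∃ l : ℕ, (d : ℤ) + ∑ j ∈ Finset.range l, (ξr j ω : ℤ) = k) ∨
      (∃ l : ℕ, -(g : ℤ) - ∑ j ∈ Finset.range l, (ξl j ω : ℤ) = k))
    -- the σ-finite measure `Q(A) = Σ_{d,g} f(d+g) P(T(d,g) ∈ A)`
    (Q : Measure (ℤ → Prop))
    (hQ : Q = Measure.sum (fun dg : ℕ × ℕ =>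
      f (dg.1 + dg.2 + 1) • Measure.map (T dg.1 (dg.2 + 1)) P)) :
    ∀ A : Set (ℤ → Prop), MeasurableSet A →
      Q ((fun t : ℤ → Prop => fun k => t (k - 1)) ⁻¹' A) = Q A :=
  two_sided_renewal_shift_invariance_general P ξr ξl hmeas_r hmeas_l hindep hid f hf T hT Q hQ
end
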